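/- Assume f satisfies (f_reg), (f_eq), (f_0), and that R1 > 0. Then every solution u of the Cauchy problem with datum d > 0 on [R1,R2] satisfies H(r) ≥ F̂(d) · exp((N-1) p' (R1 - R2)/R1) for every r ∈ [R1,R2]. If moreover F_∞ := lim_{s→∞} F̂(s) = +∞, then for every M > 0 there exists D > 0 such that for every d ≥ D, every solution u of the Cauchy problem with datum d, and every r ∈ [R1, r1], one has u(r) + |u'(r)| ≥ M. -/

import Mathlib

open Real Set Filter Topology

noncomputable def phip (p s : ℝ) : ℝ := |s| ^ (p - 2) * s

def Freg (f : ℝ → ℝ) : Prop :=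
  ContinuousOn f (Ici 0) ∧ ContDiffOn ℝ 1 f (Ioi 0)

def Feq (f : ℝ → ℝ) : Prop :=
  f 0 = 0 ∧ f 1 = 0 ∧ (∀ s : ℝ, 0 < s → s < 1 → f s < 0) ∧ (∀ s : ℝ, 1 < s → 0 < f s)

def Fzero (p : ℝ) (f : ℝ → ℝ) : Prop :=
  ∃ c : ℝ, ∀ᶠ s in 𝓝[>] (0:ℝ), c ≤ f s / s ^ (p - 1)

noncomputable def pstar (p : ℝ) (N : ℕ) : EReal :=
  if p < (N:ℝ) then (((N:ℝ) * p / ((N:ℝ) - p) : ℝ) : EReal) else ⊤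

noncomputable def fstar (f : ℝ → ℝ) (s : ℝ) : ℝ := sSup (f '' Icc 1 s)

noncomputable def Fint (f : ℝ → ℝ) (s : ℝ) : ℝ := ∫ σ in (1:ℝ)..s, f σ

def Fsubl (p : ℝ) (f : ℝ → ℝ) : Prop :=
  ∃ M : ℝ, 0 < M ∧ ∀ ε > 0, ∀ᶠ s in atTop, f s / s ^ (p - 1) ≤ M + ε

def FsubcWith (p : ℝ) (N : ℕ) (f : ℝ → ℝ) (η : ℝ) : Prop :=
  (∀ c : ℝ, ∃ᶠ s in atTop, c < f s / s ^ (p - 1)) ∧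
  0 < η ∧ η < 1 ∧
  ∃ L : ℝ, (L : EReal) < pstar p N ∧
    ∀ᶠ s in atTop, fstar f s * s / Fint f (η * s) ≤ L

def Fsubc (p : ℝ) (N : ℕ) (f : ℝ → ℝ) : Prop := ∃ η : ℝ, FsubcWith p N f η

/-- A radial solution of the Neumann problem on `[R1,R2]`. -/
def NeumannSol (p : ℝ) (N : ℕ) (R1 R2 : ℝ) (f u : ℝ → ℝ) : Prop :=
  (∀ x ∈ Icc R1 R2, DifferentiableAt ℝ u x) ∧
  ContinuousOn (deriv u) (Icc R1 R2) ∧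
  (∀ x ∈ Icc R1 R2, 0 < u x) ∧
  deriv u R1 = 0 ∧ deriv u R2 = 0 ∧
  ContinuousOn (fun x => x ^ (N - 1) * phip p (deriv u x)) (Icc R1 R2) ∧
  ∀ x ∈ Ioc R1 R2,
    HasDerivAt (fun t => t ^ (N - 1) * phip p (deriv u t)) (-(x ^ (N - 1)) * f (u x)) x

noncomputable def fhat (f : ℝ → ℝ) (s : ℝ) : ℝ := if 0 ≤ s then f s else 0

noncomputable def Fhat (f : ℝ → ℝ) (s : ℝ) : ℝ := ∫ σ in (1:ℝ)..s, fhat f σ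

/-- A solution of the Cauchy problem with datum `d`, for the nonlinearity `g`. -/
def CauchySol (p : ℝ) (N : ℕ) (R1 R2 : ℝ) (g u : ℝ → ℝ) (d : ℝ) : Prop :=
  (∀ x ∈ Icc R1 R2, DifferentiableAt ℝ u x) ∧
  ContinuousOn (deriv u) (Icc R1 R2) ∧
  u R1 = d ∧ deriv u R1 = 0 ∧
  ContinuousOn (fun x => x ^ (N - 1) * phip p (deriv u x)) (Icc R1 R2) ∧
  ∀ x ∈ Ioc R1 R2,
    HasDerivAt (fun t => t ^ (N - 1) * phip p (deriv u t)) (-(x ^ (N - 1)) * g (u x)) x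

noncomputable def rOne (R1 R2 : ℝ) (u : ℝ → ℝ) : ℝ :=
  sSup {x | x ∈ Icc R1 R2 ∧ ∀ s ∈ Ico R1 x, 0 < u s}

noncomputable def rZero (R2 η d : ℝ) (u : ℝ → ℝ) : ℝ :=
  sSup {x | x ∈ Icc 0 R2 ∧ ∀ s ∈ Ico 0 x, η * d < u s}

noncomputable def energy (p : ℝ) (f u : ℝ → ℝ) (x : ℝ) : ℝ :=
  |deriv u x| ^ p / (p / (p - 1)) + Fhat f (u x)

def NonConstOn (R1 R2 : ℝ) (u : ℝ → ℝ) : Prop :=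
  ∃ x ∈ Icc R1 R2, ∃ x' ∈ Icc R1 R2, u x ≠ u x'

def DistinctOn (R1 R2 : ℝ) (u v : ℝ → ℝ) : Prop :=
  ∃ x ∈ Icc R1 R2, u x ≠ v x

noncomputable def nOverPstar (p : ℝ) (N : ℕ) : ℝ :=
  if p < (N:ℝ) then ((N:ℝ) - p) / p else 0

/-!
Along a solution the energy `H = |u'|^p / p' + F̂(u)` satisfies `H'(r) = -(N-1)/r · |u'(r)|^p`.
Since `F̂ ≥ 0` we have `|u'|^p ≤ p' H`, hence `H' ≥ -K H` with `K = (N-1) p' / R1`, so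
`H(r) e^{K r}` is nondecreasing; as `H(R1) = F̂(d)`, this is the lower bound.
On `[R1, r1]` we have `u ≥ 0`, so wherever `u + |u'| < M` the energy is at most
`M^p / p' + max_{[0,M]} F̂`, which the lower bound excludes once `F̂(d)` is large.
-/

section Phip

variable {p : ℝ}

lemma abs_phip (hp : 1 < p) (s : ℝ) : |phip p s| = |s| ^ (p - 1) := by
  rcases eq_or_ne s 0 with rfl | hs
  · simp [phip, Real.zero_rpow (by linarith : p - 1 ≠ 0)]
  · rw [phip, abs_mul, abs_of_nonneg (Real.rpow_nonneg (abs_nonneg s) _),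
      show p - 1 = (p - 2) + 1 by ring, Real.rpow_add_one (abs_ne_zero.2 hs)]

lemma phip_conj_phip (hp : 1 < p) (s : ℝ) : phip (p / (p - 1)) (phip p s) = s := by
  rcases eq_or_ne s 0 with rfl | hs
  · simp [phip]
  · have hp1 : p - 1 ≠ 0 := by linarith
    rw [phip, abs_phip hp, ← Real.rpow_mul (abs_nonneg s), phip, ← mul_assoc,
      show (p - 1) * (p / (p - 1) - 2) = 2 - p by field_simp; ring,
      ← Real.rpow_add (abs_pos.2 hs)]
    norm_num

lemma mul_phip (hp : 1 < p) (s : ℝ) : s * phip p s = |s| ^ p := by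
  rcases eq_or_ne s 0 with rfl | hs
  · simp [phip, Real.zero_rpow (by linarith : p ≠ 0)]
  · rw [show s * phip p s = |s| ^ (p - 2) * |s| ^ (2 : ℝ) by
        rw [phip, Real.rpow_two, sq_abs]; ring,
      ← Real.rpow_add (abs_pos.2 hs)]
    norm_num

lemma abs_phip_rpow_conj (hp : 1 < p) (s : ℝ) :
    |phip p s| ^ (p / (p - 1)) = |s| ^ p := by
  have hp1 : p - 1 ≠ 0 := by linarith
  rw [abs_phip hp, ← Real.rpow_mul (abs_nonneg s), mul_div_cancel₀ p hp1]

lemma hasDerivAt_abs_rpow_div_self (hp : 1 < p) (t : ℝ) :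
    HasDerivAt (fun s : ℝ => |s| ^ p / p) (phip p t) t := by
  refine ((hasDerivAt_abs_rpow t hp).div_const p).congr_deriv ?_
  unfold phip
  field_simp

end Phip

lemma HasDerivAt.of_pow_mul {w : ℝ → ℝ} {n : ℕ} {x a : ℝ} (hx : x ≠ 0)
    (h : HasDerivAt (fun t => t ^ n * w t) (-(x ^ n) * a) x) :
    HasDerivAt w (-a - n / x * w x) x := by
  have hquot := h.div (hasDerivAt_pow n x) (pow_ne_zero n hx)
  have hw : (fun t => t ^ n * w t / t ^ n) =ᶠ[𝓝 x] w := by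
    filter_upwards [eventually_ne_nhds hx] with t ht
    field_simp
  refine (hquot.congr_of_eventuallyEq hw.symm).congr_deriv ?_
  rcases n with _ | k
  · simp
  · simp only [Nat.add_sub_cancel]
    push_cast
    field_simp
    ring

section Primitive

variable {f : ℝ → ℝ}

lemma continuous_fhat (hf : ContinuousOn f (Ici 0)) (hf0 : f 0 = 0) : Continuous (fhat f) := by
  have h : fhat f = fun s => f (max s 0) := by
    funext s
    rcases le_or_gt 0 s with hs | hs
    · simp [fhat, hs]
    · simp [fhat, hs.not_ge, hs.le, hf0]
  rw [h]
  exact hf.comp_continuous (continuous_id.max continuous_const) fun s => le_max_right s 0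

lemma hasDerivAt_Fhat (hc : Continuous (fhat f)) (s : ℝ) :
    HasDerivAt (Fhat f) (fhat f s) s :=
  intervalIntegral.integral_hasDerivAt_right (hc.intervalIntegrable _ _)
    hc.stronglyMeasurable.stronglyMeasurableAtFilter hc.continuousAt

lemma continuous_Fhat (hc : Continuous (fhat f)) : Continuous (Fhat f) :=
  continuous_iff_continuousAt.2 fun s => (hasDerivAt_Fhat hc s).continuousAt

lemma fhat_nonneg_of_one_le (heq : Feq f) {s : ℝ} (hs : 1 ≤ s) : 0 ≤ fhat f s := by
  rw [fhat, if_pos (by linarith)]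
  rcases hs.eq_or_lt with rfl | h
  · exact heq.2.1.ge
  · exact (heq.2.2.2 s h).le

lemma fhat_nonpos_of_le_one (heq : Feq f) {s : ℝ} (hs : s ≤ 1) : fhat f s ≤ 0 := by
  unfold fhat
  split_ifs with h
  · rcases h.eq_or_lt with rfl | h0
    · exact heq.1.le
    rcases hs.eq_or_lt with rfl | h1
    · exact heq.2.1.le
    · exact (heq.2.2.1 s h0 h1).le
  · exact le_rfl

lemma Fhat_nonneg (heq : Feq f) (s : ℝ) : 0 ≤ Fhat f s := by
  rcases le_total 1 s with h | h
  · exact intervalIntegral.integral_nonneg h fun σ hσ => fhat_nonneg_of_one_le heq hσ.1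
  · rw [Fhat, intervalIntegral.integral_symm, ← intervalIntegral.integral_neg]
    exact intervalIntegral.integral_nonneg h fun σ hσ =>
      neg_nonneg.2 (fhat_nonpos_of_le_one heq hσ.2)

end Primitive

lemma mul_exp_le_of_hasDerivAt {H H' : ℝ → ℝ} {K a b x : ℝ} (hc : ContinuousOn H (Icc a b))
    (hd : ∀ y ∈ Ioo a b, HasDerivAt H (H' y) y) (hle : ∀ y ∈ Ioo a b, -(K * H y) ≤ H' y)
    (hx : x ∈ Icc a b) : H a * exp (K * (a - x)) ≤ H x := by
  have hG : ∀ y ∈ Ioo a b, HasDerivAt (fun t => H t * exp (K * t))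
      (H' y * exp (K * y) + H y * (exp (K * y) * K)) y := fun y hy =>
    (hd y hy).mul (by simpa using ((hasDerivAt_id y).const_mul K).exp)
  have hmono : MonotoneOn (fun t => H t * exp (K * t)) (Icc a b) := by
    refine monotoneOn_of_deriv_nonneg (convex_Icc a b)
      (hc.mul (continuous_exp.comp (continuous_const_mul K)).continuousOn) ?_ ?_
    · rw [interior_Icc]
      exact fun y hy => (hG y hy).differentiableAt.differentiableWithinAt
    · rw [interior_Icc]
      intro y hy
      rw [(hG y hy).deriv]
      nlinarith [hle y hy, exp_pos (K * y)]
  have h := hmono (left_mem_Icc.2 (hx.1.trans hx.2)) hx hx.1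
  rw [mul_sub, exp_sub, ← mul_div_assoc, div_le_iff₀ (exp_pos _)]
  exact h

section Energy

variable {p : ℝ} {N : ℕ} {R1 R2 d : ℝ} {f u : ℝ → ℝ}

lemma CauchySol.continuousOn (hu : CauchySol p N R1 R2 (fhat f) u d) :
    ContinuousOn u (Icc R1 R2) := fun x hx => (hu.1 x hx).continuousAt.continuousWithinAt

lemma hasDerivAt_energy (hp : 1 < p) (hN : 1 ≤ N) (hfc : Continuous (fhat f))
    (hu : CauchySol p N R1 R2 (fhat f) u d) {x : ℝ} (hx : x ∈ Ioc R1 R2) (hx0 : 0 < x) :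
    HasDerivAt (energy p f u) (-(((N : ℝ) - 1) / x) * |deriv u x| ^ p) x := by
  have hq : 1 < p / (p - 1) := (one_lt_div (by linarith)).mpr (by linarith)
  have hw : HasDerivAt (fun t => phip p (deriv u t))
      (-fhat f (u x) - ((N : ℝ) - 1) / x * phip p (deriv u x)) x := by
    have h := (hu.2.2.2.2.2 x hx).of_pow_mul hx0.ne'
    rwa [Nat.cast_sub hN, Nat.cast_one] at h
  -- `|u'|^p / p' = |φ_p(u')|^{p'} / p'`, and `φ_{p'} ∘ φ_p = id`
  have hkin : HasDerivAt (fun t => |deriv u t| ^ p / (p / (p - 1)))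
      (deriv u x * (-fhat f (u x) - ((N : ℝ) - 1) / x * phip p (deriv u x))) x := by
    have h := (hasDerivAt_abs_rpow_div_self hq (phip p (deriv u x))).comp x hw
    simpa only [Function.comp_def, abs_phip_rpow_conj hp, phip_conj_phip hp] using h
  have hpot : HasDerivAt (fun t => Fhat f (u t)) (fhat f (u x) * deriv u x) x :=
    (hasDerivAt_Fhat hfc (u x)).comp x (hu.1 x ⟨hx.1.le, hx.2⟩).hasDerivAt
  refine (hkin.add hpot).congr_deriv ?_
  rw [← mul_phip hp]
  ring

lemma continuousOn_energy (hp : 1 < p) (hfc : Continuous (fhat f))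
    (hu : CauchySol p N R1 R2 (fhat f) u d) : ContinuousOn (energy p f u) (Icc R1 R2) := by
  refine ContinuousOn.add ?_ ?_
  · exact (hu.2.1.abs.rpow_const fun _ _ => Or.inr (by linarith)).div_const _
  · exact (continuous_Fhat hfc).comp_continuousOn hu.continuousOn

lemma CauchySol.energy_left (hp : 0 < p) (hu : CauchySol p N R1 R2 (fhat f) u d) :
    energy p f u R1 = Fhat f d := by
  simp [energy, hu.2.2.1, hu.2.2.2.1, Real.zero_rpow hp.ne']

lemma abs_deriv_rpow_le_energy (hp : 1 < p) (heq : Feq f) (x : ℝ) :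
    |deriv u x| ^ p ≤ p / (p - 1) * energy p f u x := by
  have hq : 0 < p / (p - 1) := div_pos (by linarith) (by linarith)
  have h := Fhat_nonneg heq (u x)
  rw [energy, mul_add, mul_div_cancel₀ _ hq.ne']
  nlinarith

theorem Fhat_mul_exp_le_energy (hp : 1 < p) (hN : 1 ≤ N) (hR1 : 0 < R1)
    (hfc : Continuous (fhat f)) (heq : Feq f) (hu : CauchySol p N R1 R2 (fhat f) u d)
    {x : ℝ} (hx : x ∈ Icc R1 R2) :
    Fhat f d * exp (((N : ℝ) - 1) * (p / (p - 1)) * (R1 - R2) / R1) ≤ energy p f u x := by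
  set K := ((N : ℝ) - 1) * (p / (p - 1)) / R1
  have hN1 : (0 : ℝ) ≤ N - 1 := by
    have : (1 : ℝ) ≤ N := by exact_mod_cast hN
    linarith
  have hK : 0 ≤ K := div_nonneg (mul_nonneg hN1 (div_pos (by linarith) (by linarith)).le) hR1.le
  have hdecay : ∀ y ∈ Ioo R1 R2,
      -(K * energy p f u y) ≤ -(((N : ℝ) - 1) / y) * |deriv u y| ^ p := by
    intro y hy
    have hkin := abs_deriv_rpow_le_energy (u := u) hp heq y
    have hcoef : 0 ≤ ((N : ℝ) - 1) / R1 := div_nonneg hN1 hR1.le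
    rw [neg_mul, neg_le_neg_iff]
    calc ((N : ℝ) - 1) / y * |deriv u y| ^ p ≤ ((N : ℝ) - 1) / R1 * |deriv u y| ^ p := by
          gcongr
          exact hy.1.le
      _ ≤ ((N : ℝ) - 1) / R1 * (p / (p - 1) * energy p f u y) := mul_le_mul_of_nonneg_left hkin hcoef
      _ = K * energy p f u y := by ring
  have h := mul_exp_le_of_hasDerivAt (continuousOn_energy hp hfc hu)
    (fun y hy => hasDerivAt_energy hp hN hfc hu (Ioo_subset_Ioc_self hy) (hR1.trans hy.1))
    hdecay hx
  rw [hu.energy_left (by linarith)] at h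
  refine le_trans ?_ h
  rw [show ((N : ℝ) - 1) * (p / (p - 1)) * (R1 - R2) / R1 = K * (R1 - R2) by ring]
  gcongr
  · exact Fhat_nonneg heq d
  · exact hx.2

lemma Icc_rOne_subset (hR12 : R1 ≤ R2) (hc : ContinuousOn u (Icc R1 R2)) (hu0 : 0 ≤ u R1) :
    Icc R1 (rOne R1 R2 u) ⊆ Icc R1 R2 ∩ u ⁻¹' Ici 0 := by
  set S := {x | x ∈ Icc R1 R2 ∧ ∀ s ∈ Ico R1 x, 0 < u s}
  have hS : S.Nonempty := ⟨R1, left_mem_Icc.2 hR12, fun s hs => absurd hs.2 hs.1.not_gt⟩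
  have hpos : Ico R1 (rOne R1 R2 u) ⊆ Icc R1 R2 ∩ u ⁻¹' Ici 0 := by
    intro s hs
    obtain ⟨y, hyS, hsy⟩ := exists_lt_of_lt_csSup hS hs.2
    exact ⟨⟨hs.1, hsy.le.trans hyS.1.2⟩, (hyS.2 s ⟨hs.1, hsy⟩).le⟩
  rcases lt_or_ge R1 (rOne R1 R2 u) with hlt | hge
  · rw [← closure_Ico hlt.ne]
    exact closure_minimal hpos (hc.preimage_isClosed_of_isClosed isClosed_Icc isClosed_Ici)
  · intro x hx
    obtain rfl : x = R1 := le_antisymm (hx.2.trans hge) hx.1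
    exact ⟨left_mem_Icc.2 hR12, hu0⟩

lemma energy_le_of_add_abs_deriv_le {M C x : ℝ} (hp : 1 < p)
    (hC : ∀ s ∈ Icc 0 M, Fhat f s ≤ C)
    (hu0 : 0 ≤ u x) (hM : u x + |deriv u x| ≤ M) :
    energy p f u x ≤ M ^ p / (p / (p - 1)) + C := by
  have hq : 0 < p / (p - 1) := div_pos (by linarith) (by linarith)
  have hkin : |deriv u x| ^ p ≤ M ^ p :=
    Real.rpow_le_rpow (abs_nonneg _) (by linarith) (by linarith)
  have hpot : Fhat f (u x) ≤ C := hC (u x) ⟨hu0, by linarith [abs_nonneg (deriv u x)]⟩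
  rw [energy]
  gcongr

theorem exists_le_add_abs_deriv_of_tendsto_Fhat (hp : 1 < p) (hN : 1 ≤ N) (hR1 : 0 < R1)
    (hR12 : R1 ≤ R2) (hfc : Continuous (fhat f)) (heq : Feq f)
    (hF : Tendsto (Fhat f) atTop atTop) (M : ℝ) :
    ∃ D : ℝ, 0 < D ∧ ∀ d : ℝ, D ≤ d →
      ∀ u : ℝ → ℝ, CauchySol p N R1 R2 (fhat f) u d →
        ∀ x ∈ Icc R1 (rOne R1 R2 u), M ≤ u x + |deriv u x| := by
  obtain ⟨C, hC⟩ := ((isCompact_Icc (a := 0) (b := M)).image_of_continuousOn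
    (continuous_Fhat hfc).continuousOn).bddAbove
  set c := exp (((N : ℝ) - 1) * (p / (p - 1)) * (R1 - R2) / R1)
  obtain ⟨D, hD⟩ := eventually_atTop.1
    (hF.eventually_gt_atTop ((M ^ p / (p / (p - 1)) + C) / c))
  refine ⟨max D 1, by positivity, fun d hd u hu x hx => ?_⟩
  have hd1 : 1 ≤ d := le_of_max_le_right hd
  obtain ⟨hxI, hux⟩ := Icc_rOne_subset hR12 hu.continuousOn (by rw [hu.2.2.1]; linarith) hx
  by_contra! hlt
  have hupper := energy_le_of_add_abs_deriv_le hp (fun s hs => hC ⟨s, hs, rfl⟩) hux hlt.le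
  have hlower := Fhat_mul_exp_le_energy hp hN hR1 hfc heq hu hxI
  have hbig := (div_lt_iff₀ (exp_pos _)).1 (hD d (le_of_max_le_left hd))
  linarith

end Energy

theorem stmt11_general (p : ℝ) (hp : 1 < p) (N : ℕ) (hN : 1 ≤ N)
    (R1 R2 : ℝ) (hR1 : 0 < R1) (hR12 : R1 < R2)
    (f : ℝ → ℝ) (hreg : Freg f) (heq : Feq f) :
    (∀ d : ℝ, 0 < d → ∀ u : ℝ → ℝ, CauchySol p N R1 R2 (fhat f) u d →
      ∀ x ∈ Icc R1 R2,
        Fhat f d * Real.exp (((N : ℝ) - 1) * (p / (p - 1)) * (R1 - R2) / R1) ≤ energy p f u x) ∧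
    (Tendsto (Fhat f) atTop atTop →
      ∀ M : ℝ, 0 < M → ∃ D : ℝ, 0 < D ∧ ∀ d : ℝ, D ≤ d →
        ∀ u : ℝ → ℝ, CauchySol p N R1 R2 (fhat f) u d →
          ∀ x ∈ Icc R1 (rOne R1 R2 u), M ≤ u x + |deriv u x|) := by
  have hfc := continuous_fhat hreg.1 heq.1
  exact ⟨fun d _ u hu x hx => Fhat_mul_exp_le_energy hp hN hR1 hfc heq hu hx,
    fun hF M _ => exists_le_add_abs_deriv_of_tendsto_Fhat hp hN hR1 hR12.le hfc heq hF M⟩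

theorem stmt11 (p : ℝ) (hp : 1 < p) (N : ℕ) (hN : 1 ≤ N)
    (R1 R2 : ℝ) (hR1 : 0 < R1) (hR12 : R1 < R2)
    (f : ℝ → ℝ) (hreg : Freg f) (heq : Feq f) (h0 : Fzero p f) :
    (∀ d : ℝ, 0 < d → ∀ u : ℝ → ℝ, CauchySol p N R1 R2 (fhat f) u d →
      ∀ x ∈ Icc R1 R2,
        Fhat f d * Real.exp (((N : ℝ) - 1) * (p / (p - 1)) * (R1 - R2) / R1) ≤ energy p f u x) ∧
    (Tendsto (Fhat f) atTop atTop →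
      ∀ M : ℝ, 0 < M → ∃ D : ℝ, 0 < D ∧ ∀ d : ℝ, D ≤ d →
        ∀ u : ℝ → ℝ, CauchySol p N R1 R2 (fhat f) u d →
          ∀ x ∈ Icc R1 (rOne R1 R2 u), M ≤ u x + |deriv u x|) :=
  stmt11_general p hp N hN R1 R2 hR1 hR12 f hreg heq
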